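/- arXiv:1501.03564 — 3 statements merged into one kernel-verified Lean document; each statement's English description precedes it below -/
import Mathlib

section
/- Let q be a prime power with q ≡ 1 (mod 3) and let η_3 be a multiplicative character of F_q of order exactly 3. Then q² · {}_3F_2(η_3, η_3, η_3; ε, ε; 1)_q = J(η_3, η_3)² − J(η_3², η_3²). -/
open Finset

/-- The Jacobi sum `J(A,B) = ∑_{x ∈ F} A(x) B(1-x)` of two multiplicative characters. -/
noncomputable def jacobiSumC {F : Type} [Field F] [Fintype F]
    (A B : MulChar F ℂ) : ℂ :=
  ∑ x : F, A x * B (1 - x)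

/-- Greene's binomial coefficient `(A | B) = B(-1)/q · J(A, B̄)`. -/
noncomputable def greeneBinom {F : Type} [Field F] [Fintype F]
    (A B : MulChar F ℂ) : ℂ :=
  B (-1) / (Fintype.card F : ℂ) * jacobiSumC A B⁻¹

/-- Greene's Gaussian hypergeometric function
`_{m+1}F_m(A_0, …, A_m; B_1, …, B_m; x)_q`. -/
noncomputable def greeneF {F : Type} [Field F] [Fintype F] (m : ℕ)
    (A : Fin (m + 1) → MulChar F ℂ) (B : Fin m → MulChar F ℂ) (x : F) : ℂ :=
  letI : Fintype (MulChar F ℂ) := Fintype.ofFinite _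
  (Fintype.card F : ℂ) / ((Fintype.card F : ℂ) - 1) *
    ∑ χ : MulChar F ℂ,
      greeneBinom (A 0 * χ) χ *
        (∏ j : Fin m, greeneBinom (A j.succ * χ) (B j * χ)) * χ x

/-!
Orthogonality of the characters `χ` turns `(q - 1) q² ₃F₂(η, η, η; ε, ε; 1)` into `q - 1`
times the sum of `η(xyz)` over the solutions of `xyz + (1 - x)(1 - y)(1 - z) = 0`, i.e. of
`z (1 - x - y) = (1 - x)(1 - y)`. Solving for `z` leaves
`∑_{x,y} η(x) η(1 - x) η(y) η(1 - y) / η(1 - x - y)`. As `η³ = 1`, this summand is invariant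
under the projective change of variables `(x, y) = (a, b) / (1 + a + b)`, which turns the sum
into `∑_{1 + a + b ≠ 0} g(a) g(b)` with `g(a) = η(a) η(1 + a)`. This is `(∑ g)² = J(η, η)²`
minus the diagonal `b = -1 - a`, where `g(-1 - a) = g(a)` and `∑ g² = J(η², η²)`.
-/

namespace MulChar

lemma apply_div {G G' : Type*} [CommGroupWithZero G] [CommGroupWithZero G'] (χ : MulChar G G')
    (a b : G) : χ (a / b) = χ a / χ b := by
  rw [div_eq_mul_inv, map_mul, ← inv_apply', inv_apply_eq_inv', div_eq_mul_inv]

lemma apply_pow_eq_one {R R' : Type*} [CommMonoid R] [CommMonoidWithZero R'] {χ : MulChar R R'}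
    {n : ℕ} (h : χ ^ n = 1) {a : R} (ha : IsUnit a) : χ a ^ n = 1 := by
  obtain ⟨u, rfl⟩ := ha
  rw [← pow_apply_coe, h, one_apply_coe]

lemma apply_neg_one_mul_self {R R' : Type*} [CommRing R] [CommMonoidWithZero R']
    (χ : MulChar R R') : χ (-1) * χ (-1) = 1 := by
  rw [← map_mul, neg_mul_neg, one_mul, map_one]

lemma sum_apply_eq_ite {F : Type*} [Field F] [Fintype F] [Fintype (MulChar F ℂ)] [DecidableEq F]
    (a : F) : ∑ χ : MulChar F ℂ, χ a = if a = 1 then (Fintype.card F - 1 : ℂ) else 0 := by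
  have : NeZero (Monoid.exponent Fˣ : ℂ) :=
    ⟨Nat.cast_ne_zero.mpr Monoid.exponent_ne_zero_of_finite⟩
  split_ifs with ha
  · have hcard := card_eq_card_units_of_hasEnoughRootsOfUnity F ℂ
    rw [Nat.card_eq_fintype_card, Nat.card_eq_fintype_card, Fintype.card_units] at hcard
    rw [ha, sum_congr rfl fun χ _ => map_one χ, sum_const, card_univ, hcard, nsmul_eq_mul,
      mul_one, Nat.cast_sub Fintype.card_pos, Nat.cast_one]
  · obtain ⟨χ, hχ⟩ := exists_apply_ne_one_of_hasEnoughRootsOfUnity F ℂ ha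
    refine eq_zero_of_mul_eq_self_left hχ ?_
    simp only [mul_sum, ← mul_apply]
    exact Fintype.sum_bijective _ (Group.mulLeft_bijective χ) _ _ fun _ ↦ rfl

end MulChar

open Finset

lemma card_sub_one_ne_zero {α R : Type*} [Fintype α] [Nontrivial α] [AddGroupWithOne R]
    [CharZero R] : (Fintype.card α : R) - 1 ≠ 0 :=
  sub_ne_zero.mpr (Nat.cast_ne_one.mpr Fintype.one_lt_card.ne')

lemma neg_mul_div_eq_one_iff {F : Type*} [Field F] {x y z : F} (h : x * y * z ≠ 0) :
    -(x * y * z) / ((1 - x) * (1 - y) * (1 - z)) = 1 ↔ z * (1 - x - y) = (1 - x) * (1 - y) := by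
  constructor
  · intro hxyz
    have hD : (1 - x) * (1 - y) * (1 - z) ≠ 0 := by
      rintro hD
      rw [hD, div_zero] at hxyz
      exact zero_ne_one hxyz
    rw [div_eq_one_iff_eq hD] at hxyz
    linear_combination hxyz
  · intro hz
    have hD : -(x * y * z) = (1 - x) * (1 - y) * (1 - z) := by linear_combination hz
    rw [hD, div_self (hD ▸ neg_ne_zero.mpr h)]

lemma sum_filter_one_add_add_ne_zero_mul {A R : Type*} [Ring A] [Fintype A] [DecidableEq A]
    [CommRing R] (g : A → R) :
    ∑ p ∈ univ.filter (fun p : A × A => 1 + p.1 + p.2 ≠ 0), g p.1 * g p.2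
      = (∑ a, g a) ^ 2 - ∑ a, g a * g (-1 - a) := by
  have hall : ∑ p : A × A, g p.1 * g p.2 = (∑ a, g a) ^ 2 := by
    rw [sq, sum_mul_sum, Fintype.sum_prod_type]
  have hdiag : ∑ p ∈ univ.filter (fun p : A × A => ¬ 1 + p.1 + p.2 ≠ 0), g p.1 * g p.2
      = ∑ a, g a * g (-1 - a) := by
    rw [sum_filter, Fintype.sum_prod_type]
    refine sum_congr rfl fun a _ => ?_
    simp only [not_not, show ∀ b : A, 1 + a + b = 0 ↔ b = -1 - a from fun b => by
      rw [add_comm, ← eq_neg_iff_add_eq_zero, neg_add, sub_eq_add_neg]]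
    rw [sum_ite_eq', if_pos (mem_univ _)]
  rw [← hall, ← hdiag]
  exact eq_sub_of_add_eq (sum_filter_add_sum_filter_not _ _ _)

lemma sum_apply_mul_apply_one_add_eq_jacobiSum {R R' : Type*} [CommRing R] [Fintype R]
    [CommRing R'] {χ : MulChar R R'} (hχ : χ (-1) = 1) :
    ∑ a, χ a * χ (1 + a) = jacobiSum χ χ := by
  rw [jacobiSum, ← Equiv.sum_comp (Equiv.neg R)]
  refine sum_congr rfl fun x _ => ?_
  rw [Equiv.neg_apply, ← sub_eq_add_neg, neg_eq_neg_one_mul, map_mul, hχ, one_mul]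

section

variable {F : Type*} [Field F] [Fintype F]

-- The terms with `(1 - x)(1 - y)(1 - z) = 0` vanish on both sides, on the right as `a / 0 = 0`.
lemma apply_neg_one_mul_jacobiSum_pow_three (η χ : MulChar F ℂ) :
    χ (-1) * jacobiSum (η * χ) χ⁻¹ ^ 3
      = ∑ x, ∑ y, ∑ z, η (x * y * z) * χ (-(x * y * z) / ((1 - x) * (1 - y) * (1 - z))) := by
  simp only [jacobiSum, pow_three, sum_mul, mul_sum]
  refine sum_congr rfl fun x _ => sum_congr rfl fun y _ => sum_congr rfl fun z _ => ?_
  rw [show -(x * y * z) = -1 * x * y * z by ring, div_eq_mul_inv]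
  simp only [map_mul, mul_inv, MulChar.mul_apply, MulChar.inv_apply']
  ring

lemma sum_apply_neg_one_mul_jacobiSum_pow_three [Fintype (MulChar F ℂ)] [DecidableEq F]
    (η : MulChar F ℂ) :
    ∑ χ : MulChar F ℂ, χ (-1) * jacobiSum (η * χ) χ⁻¹ ^ 3
      = ((Fintype.card F : ℂ) - 1) * ∑ x, ∑ y, ∑ z,
          if z * (1 - x - y) = (1 - x) * (1 - y) then η (x * y * z) else 0 := by
  simp only [apply_neg_one_mul_jacobiSum_pow_three, mul_sum]
  rw [sum_comm]
  refine sum_congr rfl fun x _ => ?_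
  rw [sum_comm]
  refine sum_congr rfl fun y _ => ?_
  rw [sum_comm]
  refine sum_congr rfl fun z _ => ?_
  rw [← mul_sum, MulChar.sum_apply_eq_ite]
  by_cases hxyz : x * y * z = 0
  · simp [hxyz, MulChar.map_zero]
  · rw [if_congr (neg_mul_div_eq_one_iff hxyz) rfl rfl]
    split_ifs <;> ring

variable {K : Type*} [Field K]

lemma sum_ite_mul_one_sub_sub_eq [DecidableEq F] (η : MulChar F K) (x y : F) :
    ∑ z, (if z * (1 - x - y) = (1 - x) * (1 - y) then η (x * y * z) else 0)
      = η x * η (1 - x) * η y * η (1 - y) / η (1 - x - y) := by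
  by_cases hc : 1 - x - y = 0
  · rw [hc, MulChar.map_zero, div_zero]
    refine sum_eq_zero fun z _ => ?_
    split_ifs with h
    · have hxyz : x * y * z = 0 := by linear_combination (-z) * h - z * hc
      rw [hxyz, MulChar.map_zero]
    · rfl
  · simp only [← eq_div_iff hc]
    rw [sum_ite_eq', if_pos (mem_univ _)]
    simp only [map_mul, MulChar.apply_div]
    ring

lemma sum_div_apply_one_sub_sub_eq_sum_filter [DecidableEq F] {η : MulChar F K}
    (hη : η ^ 3 = 1) :
    ∑ x, ∑ y, η x * η (1 - x) * η y * η (1 - y) / η (1 - x - y)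
      = ∑ p ∈ univ.filter (fun p : F × F => 1 + p.1 + p.2 ≠ 0),
          η p.1 * η (1 + p.1) * (η p.2 * η (1 + p.2)) := by
  rw [← Fintype.sum_prod_type'
      (f := fun x y => η x * η (1 - x) * η y * η (1 - y) / η (1 - x - y)),
    ← sum_filter_of_ne (p := fun p : F × F => 1 - p.1 - p.2 ≠ 0)]
  swap
  · rintro ⟨x, y⟩ - h hc
    rw [hc, MulChar.map_zero, div_zero] at h
    exact h rfl
  refine sum_nbij' (fun p => (p.1 / (1 - p.1 - p.2), p.2 / (1 - p.1 - p.2)))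
    (fun p => (p.1 / (1 + p.1 + p.2), p.2 / (1 + p.1 + p.2))) ?hi ?hj ?left_inv ?right_inv ?h
  all_goals
    rintro ⟨x, y⟩ h
    simp only [mem_filter, mem_univ, true_and] at h
  case' hi | left_inv =>
    have e : 1 + x / (1 - x - y) + y / (1 - x - y) = 1 / (1 - x - y) := by field_simp; ring
  case' hj | right_inv =>
    have e : 1 - x / (1 + x + y) - y / (1 + x + y) = 1 / (1 + x + y) := by field_simp; ring
  case hi | hj =>
    simp only [mem_filter, mem_univ, true_and, e]
    exact one_div_ne_zero h
  case left_inv | right_inv =>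
    simp only [e, div_div_div_cancel_right₀ h, div_one]
  case h =>
    have ex : 1 + x / (1 - x - y) = (1 - y) / (1 - x - y) := by field_simp; ring
    have ey : 1 + y / (1 - x - y) = (1 - x) / (1 - x - y) := by field_simp; ring
    have hc : η (1 - x - y) ^ 3 = 1 := MulChar.apply_pow_eq_one hη (Ne.isUnit h)
    have hc0 : η (1 - x - y) ≠ 0 := fun h0 => by simp [h0] at hc
    simp only [ex, ey, MulChar.apply_div]
    field_simp
    linear_combination (η x * η (1 - x) * η y * η (1 - y)) * hc

lemma sum_filter_eq_jacobiSum_sq_sub [DecidableEq F] {η : MulChar F K} (hη : η ^ 3 = 1) :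
    ∑ p ∈ univ.filter (fun p : F × F => 1 + p.1 + p.2 ≠ 0),
        η p.1 * η (1 + p.1) * (η p.2 * η (1 + p.2))
      = jacobiSum η η ^ 2 - jacobiSum (η ^ 2) (η ^ 2) := by
  have hη₁ : η (-1) = 1 := MulChar.val_neg_one_eq_one_of_odd_order (by decide) hη
  have hη₂ : (η ^ 2) (-1) = 1 := by rw [MulChar.pow_apply' η two_ne_zero, hη₁, one_pow]
  rw [sum_filter_one_add_add_ne_zero_mul (fun a => η a * η (1 + a)),
    sum_apply_mul_apply_one_add_eq_jacobiSum hη₁,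
    ← sum_apply_mul_apply_one_add_eq_jacobiSum hη₂]
  congr 1
  refine sum_congr rfl fun a _ => ?_
  have e₁ : -1 - a = -1 * (1 + a) := by ring
  have e₂ : 1 + (-1 - a) = -1 * a := by ring
  rw [e₂, e₁, map_mul, map_mul, hη₁, MulChar.pow_apply' η two_ne_zero,
    MulChar.pow_apply' η two_ne_zero]
  ring

end

lemma jacobiSumC_eq_jacobiSum {F : Type} [Field F] [Fintype F] (A B : MulChar F ℂ) :
    jacobiSumC A B = jacobiSum A B :=
  rfl

lemma card_sub_one_mul_sq_card_mul_greeneF {F : Type} [Field F] [Fintype F]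
    [Fintype (MulChar F ℂ)] (η : MulChar F ℂ) :
    ((Fintype.card F : ℂ) - 1) *
        ((Fintype.card F : ℂ) ^ 2 * greeneF 2 (fun _ => η) (fun _ => 1) 1)
      = ∑ χ : MulChar F ℂ, χ (-1) * jacobiSum (η * χ) χ⁻¹ ^ 3 := by
  have hq : (Fintype.card F : ℂ) ≠ 0 := Nat.cast_ne_zero.mpr Fintype.card_ne_zero
  have hq1 : (Fintype.card F : ℂ) - 1 ≠ 0 := card_sub_one_ne_zero
  simp only [greeneF, greeneBinom, jacobiSumC_eq_jacobiSum, Fin.prod_univ_two, one_mul, map_one,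
    mul_one, mul_sum]
  rw [Subsingleton.elim (Fintype.ofFinite (MulChar F ℂ)) ‹_›]
  refine sum_congr rfl fun χ _ => ?_
  field_simp
  linear_combination (χ (-1) * jacobiSum (η * χ) χ⁻¹ ^ 3) * MulChar.apply_neg_one_mul_self χ

theorem stmt_2_general {F : Type} [Field F] [Fintype F]
    (η₃ : MulChar F ℂ) (hη₃ : orderOf η₃ = 3) :
    (Fintype.card F : ℂ) ^ 2 * greeneF 2 (fun _ => η₃) (fun _ => 1) 1
      = jacobiSumC η₃ η₃ ^ 2 - jacobiSumC (η₃ ^ 2) (η₃ ^ 2) := by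
  classical
  let _ : Fintype (MulChar F ℂ) := Fintype.ofFinite _
  have hη : η₃ ^ 3 = 1 := hη₃ ▸ pow_orderOf_eq_one η₃
  refine mul_left_cancel₀ (card_sub_one_ne_zero (α := F)) ?_
  rw [card_sub_one_mul_sq_card_mul_greeneF, sum_apply_neg_one_mul_jacobiSum_pow_three,
    jacobiSumC_eq_jacobiSum, jacobiSumC_eq_jacobiSum, ← sum_filter_eq_jacobiSum_sq_sub hη,
    ← sum_div_apply_one_sub_sub_eq_sum_filter hη]
  simp only [sum_ite_mul_one_sub_sub_eq]

/-- If `q ≡ 1 (mod 3)` and `η₃` has order exactly `3`, then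
`q² · ₃F₂(η₃,η₃,η₃; ε,ε; 1)_q = J(η₃,η₃)² − J(η₃²,η₃²)`. -/
theorem stmt_2 {F : Type} [Field F] [Fintype F]
    (p e : ℕ) (hp : p.Prime) (he : 0 < e) (hcard : Fintype.card F = p ^ e)
    (hq : Fintype.card F % 3 = 1)
    (η₃ : MulChar F ℂ) (hη₃ : orderOf η₃ = 3) :
    (Fintype.card F : ℂ) ^ 2 * greeneF 2 (fun _ => η₃) (fun _ => 1) 1
      = jacobiSumC η₃ η₃ ^ 2 - jacobiSumC (η₃ ^ 2) (η₃ ^ 2) :=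
  stmt_2_general η₃ hη₃
end

section
/- Let n ≥ 2 and r ≥ 1 be integers, let j be an integer with 1 ≤ j < n, let p be a prime with p ≡ 1 (mod n), and let x ∈ Z_p. Then Σ_{k=0}^{j(p−1)/n} ((j/n)_k^r / k!^r) · x^k ≡ Σ_{k=0}^{p−1} ((j/n)_k^r / k!^r) · x^k (mod p^r) in Z_p; that is, the truncated hypergeometric series {}_rF_{r−1}(j/n, …, j/n; 1, …, 1; x) truncated at j(p−1)/n and at p−1 agree modulo p^r. -/
open Finset

/-- The rising factorial (Pochhammer symbol) `(a)_k = a(a+1)⋯(a+k−1)` in `ℤ_p`. -/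
noncomputable def poch {p : ℕ} [Fact p.Prime] (a : ℤ_[p]) (k : ℕ) : ℤ_[p] :=
  ∏ i ∈ Finset.range k, (a + (i : ℤ_[p]))

/-- For a positive integer `a`, `Γ_p(a) = (−1)^a ∏_{0<j<a, p∤j} j ∈ ℤ_p`; this represents
the `p`-adic Gamma value `Γ_p(t)` modulo `p^r` whenever `a ≡ t (mod p^r)`. -/
noncomputable def GammaP (p : ℕ) [Fact p.Prime] (a : ℕ) : ℤ_[p] :=
  (-1) ^ a * ∏ j ∈ (Finset.Ioo 0 a).filter (fun j => ¬ p ∣ j), (j : ℤ_[p])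

/-- Lemma 2.1: the truncations of `ᵣF_{r−1}(j/n,…,j/n; 1,…,1; x)` at `j(p−1)/n`
and at `p−1` agree modulo `p^r`. -/
theorem stmt_9 (n r j p : ℕ) [Fact p.Prime] (hn : 2 ≤ n) (hr : 1 ≤ r)
    (hj1 : 1 ≤ j) (hj2 : j < n) (hpn : p % n = 1) (x : ℤ_[p]) :
    ∃ z : ℤ_[p],
      (∑ k ∈ Finset.range (j * (p - 1) / n + 1),
          poch ((j : ℤ_[p]) * Ring.inverse (n : ℤ_[p])) k ^ r *
            Ring.inverse (k.factorial : ℤ_[p]) ^ r * x ^ k)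
        - (∑ k ∈ Finset.range p,
            poch ((j : ℤ_[p]) * Ring.inverse (n : ℤ_[p])) k ^ r *
              Ring.inverse (k.factorial : ℤ_[p]) ^ r * x ^ k)
        = (p : ℤ_[p]) ^ r * z := by
  have hp : p.Prime := Fact.out
  have hp2 : 2 ≤ p := hp.two_le
  -- n < p
  have hnp : n < p := by
    rcases Nat.lt_or_ge p n with h | h
    · rw [Nat.mod_eq_of_lt h] at hpn; omega
    · rcases h.eq_or_lt with h1 | h1
      · rw [← h1, Nat.mod_self] at hpn; omega
      · exact h1
  have hq0 : p - 1 = n * (p / n) := by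
    have := Nat.mod_add_div p n
    omega
  set q := p / n with hqdef
  have hq : p - 1 = n * q := hq0
  have hq1 : 1 ≤ q := by
    rcases Nat.eq_zero_or_pos q with h | h
    · rw [h, Nat.mul_zero] at hq; omega
    · exact h
  set a : ℤ_[p] := (j : ℤ_[p]) * Ring.inverse (n : ℤ_[p]) with ha
  set m := j * q with hm
  have hmdiv : j * (p - 1) / n = m := by
    rw [hq, show j * (n * q) = n * (j * q) by ring, Nat.mul_div_cancel_left _ (by omega)]
  have hmp : m + 1 ≤ p := by
    have : j * q < n * q := Nat.mul_lt_mul_of_lt_of_le hj2 le_rfl (by omega)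
    omega
  -- n is a unit
  have hu : IsUnit (n : ℤ_[p]) := by
    rw [PadicInt.isUnit_iff]
    have h1 : ‖((n : ℤ) : ℤ_[p])‖ ≤ 1 := PadicInt.norm_le_one _
    have h2 : ¬ ‖((n : ℤ) : ℤ_[p])‖ < 1 := by
      rw [PadicInt.norm_int_lt_one_iff_dvd]
      intro hdvd
      have := Int.le_of_dvd (by exact_mod_cast (by omega : 0 < n)) hdvd
      omega
    push_cast at h1 h2 ⊢
    linarith
  have hninv : (n : ℤ_[p]) * Ring.inverse (n : ℤ_[p]) = 1 := Ring.mul_inverse_cancel _ hu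
  -- key : a + m = p * (j * n⁻¹)
  have key : a + (m : ℤ_[p]) = (p : ℤ_[p]) * ((j : ℤ_[p]) * Ring.inverse (n : ℤ_[p])) := by
    apply hu.mul_left_cancel
    have hnm : (n : ℤ_[p]) * (m : ℤ_[p]) = (j : ℤ_[p]) * ((p : ℤ_[p]) - 1) := by
      have : ((n * m : ℕ) : ℤ_[p]) = ((j * (p - 1) : ℕ) : ℤ_[p]) := by
        congr 1
        rw [hm, hq]; ring
      push_cast [Nat.cast_sub (by omega : 1 ≤ p)] at this
      push_cast
      linear_combination this
    calc (n : ℤ_[p]) * (a + m) = (n * Ring.inverse (n : ℤ_[p])) * j + n * m := by rw [ha]; ring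
      _ = (j : ℤ_[p]) + j * (p - 1) := by rw [hninv, hnm]; ring
      _ = (j : ℤ_[p]) * p := by ring
      _ = (n : ℤ_[p]) * ((p : ℤ_[p]) * ((j : ℤ_[p]) * Ring.inverse (n : ℤ_[p]))) := by
          rw [show (n : ℤ_[p]) * ((p : ℤ_[p]) * ((j : ℤ_[p]) * Ring.inverse (n : ℤ_[p]))) = ((n : ℤ_[p]) * Ring.inverse (n : ℤ_[p])) * (p * j) by ring, hninv]; ring
  -- tail divisibility
  have htail : ∀ k ∈ Finset.Ico (m + 1) p,
      (p : ℤ_[p]) ^ r ∣ poch a k ^ r * Ring.inverse (k.factorial : ℤ_[p]) ^ r * x ^ k := by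
    intro k hk
    rw [Finset.mem_Ico] at hk
    have hpa : (p : ℤ_[p]) ∣ poch a k := by
      have hmem : m ∈ Finset.range k := Finset.mem_range.mpr (by omega)
      exact dvd_trans ⟨_, key⟩ (Finset.dvd_prod_of_mem _ hmem)
    exact Dvd.dvd.mul_right (Dvd.dvd.mul_right (pow_dvd_pow_of_dvd hpa r) _) _
  obtain ⟨z, hz⟩ := Finset.dvd_sum htail
  refine ⟨-z, ?_⟩
  rw [hmdiv, ← Finset.sum_range_add_sum_Ico _ hmp, hz]
  ring
end

section
/- Let p be a prime with p ≡ 1 (mod 4). Then, in Z_p, Γ_p(c) · Σ_{k=0}^{(p−1)/2} ((1/2)_k / k!)² (−1)^k ≡ Γ_p(a) · Γ_p(b) (mod p) for any positive integers a, b, c with 2a ≡ 1 (mod p), 4b ≡ 1 (mod p), and 4c ≡ 3 (mod p). (Equivalently, the truncated series {}_2F_1(1/2, 1/2; 1; −1)_{(p−1)/2} is congruent to Γ_p(1/2)Γ_p(1/4)/Γ_p(3/4) modulo p.) -/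
open Finset

/-!
Write `p = 4t + 1`. Modulo `p` we have `1/2 ≡ -2t`, so `(1/2)_k / k! ≡ (-1)^k C(2t, k)` and the
truncated series reduces to `∑ (-1)^k C(2t, k)^2 = (-1)^t C(2t, t)`, the coefficient of `X^{2t}`
in `(1 - X)^{2t} (1 + X)^{2t} = (1 - X^2)^{2t}`. Modulo `p`, `Γ_p` is `p`-periodic, because the
residues prime to `p` in a full period multiply to `-1` (Wilson). So `Γ_p(a), Γ_p(b), Γ_p(c)`
reduce to `Γ_p(2t+1) = -(2t)!`, `Γ_p(3t+1) = (-1)^{t+1} (3t)!` and `Γ_p(t+1) = (-1)^{t+1} t!`,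
and the congruence follows from `C(2t, t) t!^2 = (2t)!` together with the Wilson reflection
`(3t)! t! ≡ (-1)^{t+1}`.
-/

open scoped Nat

theorem neg_one_pow_sq {R : Type*} [Monoid R] [HasDistribNeg R] (n : ℕ) :
    ((-1 : R) ^ n) ^ 2 = 1 := by
  rw [← pow_mul, pow_mul', neg_one_sq, one_pow]

open Polynomial in
theorem Polynomial.coeff_one_sub_X_pow (R : Type*) [CommRing R] (n k : ℕ) :
    ((1 - X : R[X]) ^ n).coeff k = (-1) ^ k * n.choose k := by
  have hterm (m : ℕ) : (-X : R[X]) ^ m * 1 ^ (n - m) * (n.choose m : R[X])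
      = C ((-1) ^ m * (n.choose m : R)) * X ^ m := by
    rw [neg_pow]
    simp only [one_pow, mul_one, map_mul, map_pow, map_neg, map_one, map_natCast]
    ring
  simp_rw [sub_eq_neg_add, add_pow, finsetSum_coeff, hterm, coeff_C_mul_X_pow, sum_ite_eq,
    mem_range]
  split_ifs with hk
  · rfl
  · rw [Nat.choose_eq_zero_of_lt (by omega), Nat.cast_zero, mul_zero]

open Polynomial in
theorem alternating_sum_range_choose_sq_two_mul (R : Type*) [CommRing R] (t : ℕ) :
    ∑ k ∈ range (2 * t + 1), (-1 : R) ^ k * ((2 * t).choose k : R) ^ 2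
      = (-1) ^ t * (2 * t).choose t := by
  have hfactor : ((1 - X) ^ (2 * t) * (1 + X) ^ (2 * t) : R[X])
      = expand R 2 ((1 - X) ^ (2 * t)) := by
    rw [← mul_pow, map_pow]
    simp only [map_sub, map_one, expand_X]
    ring
  have := congrArg (coeff · (2 * t)) hfactor
  simp only [coeff_mul, coeff_expand two_pos, Nat.sum_antidiagonal_eq_sum_range_succ_mk,
    coeff_one_sub_X_pow, coeff_one_add_X_pow] at this
  rw [if_pos (dvd_mul_right 2 t), Nat.mul_div_cancel_left _ two_pos] at this
  rw [← this]
  refine sum_congr rfl fun k hk => ?_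
  rw [Nat.choose_symm (by simpa [Nat.lt_succ_iff] using hk)]
  ring

theorem prod_range_neg_natCast_add {R : Type*} [CommRing R] (n k : ℕ) :
    ∏ i ∈ range k, (-(n : R) + i) = (-1) ^ k * n.descFactorial k := by
  rw [← descPochhammer_eval_eq_descFactorial, descPochhammer_eval_eq_prod_range]
  simp_rw [show ∀ i : ℕ, -(n : R) + i = -1 * (n - i) from fun i => by ring]
  rw [prod_mul_distrib, prod_const, card_range]

theorem Function.Periodic.prod_Ico_eq_prod_range {M : Type*} [CommMonoid M] {f : ℕ → M}
    {a : ℕ} (hf : Function.Periodic f a) (n : ℕ) :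
    ∏ j ∈ Ico n (n + a), f j = ∏ j ∈ range a, f j := by
  rw [Finset.prod_eq_multiset_prod, Finset.prod_eq_multiset_prod, range_val,
    ← Nat.multiset_Ico_map_mod n a, Multiset.map_map]
  exact congrArg _ (Multiset.map_congr rfl fun j _ => (hf.map_mod_nat j).symm)

theorem ZMod.factorial_mul_factorial_of_add_eq {p m n : ℕ} [Fact p.Prime] (h : m + n + 1 = p) :
    (m ! : ZMod p) * n ! = (-1) ^ (n + 1) := by
  have hsplit := Nat.factorial_mul_descFactorial (show n ≤ p - 1 by omega)
  rw [show p - 1 - n = m by omega] at hsplit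
  have := congrArg (Nat.cast : ℕ → ZMod p) hsplit
  rw [Nat.cast_mul, ZMod.cast_descFactorial (by omega), ZMod.wilsons_lemma] at this
  linear_combination (-1) ^ n * this - (m ! : ZMod p) * n ! * neg_one_pow_sq (R := ZMod p) n

theorem ZMod.prod_range_ite_dvd (p : ℕ) [Fact p.Prime] :
    ∏ j ∈ range p, (if p ∣ j then 1 else (j : ZMod p)) = -1 := by
  have hp := (Fact.out : p.Prime).pos
  rw [range_eq_Ico, prod_eq_prod_Ico_succ_bot hp, if_pos (dvd_zero p), one_mul,
    ← ZMod.prod_Ico_one_prime p]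
  refine prod_congr rfl fun j hj => if_neg (Nat.not_dvd_of_pos_of_lt ?_ ?_) <;>
    simp only [mem_Ico] at hj <;> omega

namespace PadicInt
variable {p : ℕ} [Fact p.Prime]

theorem toZMod_ringInverse (x : ℤ_[p]) : toZMod (Ring.inverse x) = (toZMod x)⁻¹ := by
  by_cases hx : IsUnit x
  · obtain ⟨u, rfl⟩ := hx
    rw [Ring.inverse_unit, map_units_inv]
  · have : toZMod x = 0 := by
      rw [← RingHom.mem_ker, ker_toZMod]
      exact hx
    rw [Ring.inverse_non_unit x hx, this, map_zero, inv_zero]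

theorem natCast_dvd_of_toZMod_eq_zero {x : ℤ_[p]} (hx : toZMod x = 0) : (p : ℤ_[p]) ∣ x := by
  rw [← Ideal.mem_span_singleton, ← maximalIdeal_eq_span_p, ← ker_toZMod]
  exact hx

theorem toZMod_ringInverse_two {n : ℕ} (hp : p = 2 * n + 1) :
    toZMod (Ring.inverse (2 : ℤ_[p])) = -n := by
  rw [toZMod_ringInverse, map_ofNat]
  refine inv_eq_of_mul_eq_one_right ?_
  have : ((2 * n + 1 : ℕ) : ZMod p) = 0 := hp ▸ ZMod.natCast_self p
  push_cast at this
  linear_combination -this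

theorem toZMod_poch (x : ℤ_[p]) (k : ℕ) :
    toZMod (poch x k) = ∏ i ∈ range k, (toZMod x + i) := by
  simp only [poch, map_prod, map_add, map_natCast]

theorem toZMod_poch_sq_mul_inverse_factorial_sq {n k : ℕ} (hp : p = 2 * n + 1) (hk : k ≤ n) :
    toZMod (poch (Ring.inverse (2 : ℤ_[p])) k ^ 2 * Ring.inverse (k ! : ℤ_[p]) ^ 2 * (-1) ^ k)
      = (-1) ^ k * (n.choose k : ZMod p) ^ 2 := by
  have hk0 : (k ! : ZMod p) ≠ 0 := by
    rw [Ne, ZMod.natCast_eq_zero_iff, (Fact.out : p.Prime).dvd_factorial]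
    omega
  simp only [map_mul, map_pow, map_neg, map_one, toZMod_poch, toZMod_ringInverse, map_natCast,
    toZMod_ringInverse_two hp, prod_range_neg_natCast_add,
    Nat.descFactorial_eq_factorial_mul_choose]
  field_simp
  push_cast
  rw [neg_one_pow_sq, one_mul, mul_pow]

theorem toZMod_sum_poch_sq_mul_inverse_factorial_sq {n : ℕ} (hp : p = 2 * n + 1) :
    toZMod (∑ k ∈ range ((p - 1) / 2 + 1),
        poch (Ring.inverse (2 : ℤ_[p])) k ^ 2 * Ring.inverse (k ! : ℤ_[p]) ^ 2 * (-1) ^ k)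
      = ∑ k ∈ range (n + 1), (-1) ^ k * (n.choose k : ZMod p) ^ 2 := by
  rw [map_sum, show (p - 1) / 2 = n by omega]
  exact sum_congr rfl fun k hk =>
    toZMod_poch_sq_mul_inverse_factorial_sq hp (Nat.lt_succ_iff.mp (mem_range.mp hk))

end PadicInt

section GammaP
variable {p : ℕ} [Fact p.Prime]

theorem GammaP_eq_prod_range (a : ℕ) :
    GammaP p a = (-1) ^ a * ∏ j ∈ range a, if p ∣ j then 1 else (j : ℤ_[p]) := by
  have hsupp : (Ioo 0 a).filter (fun j => ¬ p ∣ j) = (range a).filter (fun j => ¬ p ∣ j) := by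
    ext j
    simp only [mem_filter, mem_Ioo, mem_range]
    constructor
    · rintro ⟨⟨-, hj⟩, hpj⟩
      exact ⟨hj, hpj⟩
    · rintro ⟨hj, hpj⟩
      exact ⟨⟨Nat.pos_of_ne_zero (by rintro rfl; exact hpj (dvd_zero p)), hj⟩, hpj⟩
  rw [GammaP, hsupp, prod_filter]
  simp only [ite_not]

theorem GammaP_succ_of_lt {n : ℕ} (hn : n < p) :
    GammaP p (n + 1) = (-1) ^ (n + 1) * (n ! : ℤ_[p]) := by
  rw [GammaP, filter_true_of_mem fun j hj => Nat.not_dvd_of_pos_of_lt ?_ ?_, ← Nat.cast_prod,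
    ← Finset.Ico_add_one_left_eq_Ioo, zero_add, prod_Ico_id_eq_factorial]
  all_goals simp only [mem_Ioo] at hj; omega

theorem toZMod_GammaP_periodic : Function.Periodic (fun a => PadicInt.toZMod (GammaP p a)) p := by
  intro a
  have hwindow : ∏ j ∈ Ico a (a + p), (if p ∣ j then 1 else (j : ZMod p)) = -1 := by
    rw [Function.Periodic.prod_Ico_eq_prod_range, ZMod.prod_range_ite_dvd]
    intro j
    simp only [Nat.dvd_add_self_right, Nat.cast_add, ZMod.natCast_self, add_zero]
  -- a full period contributes `(-1)^p * (-1) = 1`, as `(-1)^p = -1` in `ZMod p` by Fermat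
  simp only [GammaP_eq_prod_range, ← prod_range_mul_prod_Ico _ (Nat.le_add_right a p), map_mul,
    map_pow, map_neg, map_one, map_prod, apply_ite PadicInt.toZMod, map_natCast, hwindow, pow_add,
    ZMod.pow_card]
  ring

theorem toZMod_GammaP_congr {a b : ℕ} (h : a ≡ b [MOD p]) :
    PadicInt.toZMod (GammaP p a) = PadicInt.toZMod (GammaP p b) := by
  have hper := toZMod_GammaP_periodic (p := p)
  rw [← hper.map_mod_nat a, ← hper.map_mod_nat b, h]

theorem toZMod_GammaP_of_mul_modEq {k a r n : ℕ} (hk : p.Coprime k)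
    (ha : k * a ≡ r [MOD p]) (hn : k * (n + 1) ≡ r [MOD p]) (hnp : n < p) :
    PadicInt.toZMod (GammaP p a) = (-1) ^ (n + 1) * n ! := by
  rw [toZMod_GammaP_congr (Nat.ModEq.cancel_left_of_coprime hk (ha.trans hn.symm)),
    GammaP_succ_of_lt hnp]
  simp

end GammaP

theorem stmt_10_general (p : ℕ) [Fact p.Prime] (hp : p % 4 = 1)
    (a b c : ℕ)
    (hacong : 2 * a ≡ 1 [MOD p]) (hbcong : 4 * b ≡ 1 [MOD p])
    (hccong : 4 * c ≡ 3 [MOD p]) :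
    ∃ z : ℤ_[p],
      GammaP p c *
          (∑ k ∈ Finset.range ((p - 1) / 2 + 1),
            poch (Ring.inverse (2 : ℤ_[p])) k ^ 2 *
              Ring.inverse (k.factorial : ℤ_[p]) ^ 2 * (-1 : ℤ_[p]) ^ k)
        - GammaP p a * GammaP p b = (p : ℤ_[p]) * z := by
  obtain ⟨t, rfl⟩ : ∃ t, p = 4 * t + 1 := ⟨p / 4, by omega⟩
  have hcop4 : (4 * t + 1).Coprime 4 := (Nat.coprime_mul_left_add_left 1 4 t).mpr rfl
  have hmodEq {k n r : ℕ} (q : ℕ) (h : k * (n + 1) = r + (4 * t + 1) * q) :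
      k * (n + 1) ≡ r [MOD 4 * t + 1] :=
    h ▸ Nat.add_modEq_left_iff.mpr (dvd_mul_right _ q)
  have hA := toZMod_GammaP_of_mul_modEq (hcop4.coprime_dvd_right (by norm_num)) hacong
    (hmodEq (n := 2 * t) 1 (by ring)) (by omega)
  have hB := toZMod_GammaP_of_mul_modEq hcop4 hbcong (hmodEq (n := 3 * t) 3 (by ring)) (by omega)
  have hC := toZMod_GammaP_of_mul_modEq hcop4 hccong (hmodEq (n := t) 1 (by ring)) (by omega)
  have hW := ZMod.factorial_mul_factorial_of_add_eq (p := 4 * t + 1) (m := 3 * t) (n := t)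
    (by ring)
  have hK : ((2 * t).choose t : ZMod (4 * t + 1)) * t ! * t ! = (2 * t)! := by
    rw [two_mul, ← Nat.cast_mul, ← Nat.cast_mul, Nat.add_choose_mul_factorial_mul_factorial]
  apply PadicInt.natCast_dvd_of_toZMod_eq_zero
  rw [map_sub, map_mul, map_mul, hA, hB, hC,
    PadicInt.toZMod_sum_poch_sq_mul_inverse_factorial_sq (n := 2 * t) (by ring),
    alternating_sum_range_choose_sq_two_mul]
  -- with `s = (-1)^t`, the two sides are `-s^2 t! C(2t, t)` and `-s^5 (2t)! (3t)!`
  set s : ZMod (4 * t + 1) := (-1) ^ t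
  linear_combination s ^ 5 * (3 * t)! * hK - s ^ 5 * (2 * t).choose t * t ! * hW
    + s ^ 2 * t ! * (2 * t).choose t * (s ^ 2 + 1) * neg_one_pow_sq (R := ZMod (4 * t + 1)) t

/-- Proposition 3.1: for `p ≡ 1 (mod 4)`,
`₂F₁(1/2,1/2; 1; −1)_{(p−1)/2} ≡ Γ_p(1/2)Γ_p(1/4)/Γ_p(3/4) (mod p)`. -/
theorem stmt_10 (p : ℕ) [Fact p.Prime] (hp : p % 4 = 1)
    (a b c : ℕ) (ha : 0 < a) (hb : 0 < b) (hc : 0 < c)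
    (hacong : 2 * a ≡ 1 [MOD p]) (hbcong : 4 * b ≡ 1 [MOD p])
    (hccong : 4 * c ≡ 3 [MOD p]) :
    ∃ z : ℤ_[p],
      GammaP p c *
          (∑ k ∈ Finset.range ((p - 1) / 2 + 1),
            poch (Ring.inverse (2 : ℤ_[p])) k ^ 2 *
              Ring.inverse (k.factorial : ℤ_[p]) ^ 2 * (-1 : ℤ_[p]) ^ k)
        - GammaP p a * GammaP p b = (p : ℤ_[p]) * z :=
  stmt_10_general p hp a b c hacong hbcong hccong
end
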